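/- arXiv:1803.02862 — 2 statements merged into one kernel-verified Lean document; each statement's English description precedes it below -/
import Mathlib

section
/- Let G be a finite simple graph, let M be a maximum 2-matching of G, and let v be an isolated vertex of M. If v is adjacent in G to a vertex lying on a path component of M having at least 4 vertices (that is, a path of length at least 3), then G has a maximum 2-matching with strictly fewer isolated vertices than M. -/
open SimpleGraph

/-- A 2-matching of `G`: a spanning subgraph (given as a graph `M ≤ G` on the same
vertex set) in which every vertex has degree at most 2. -/
def SimpleGraph.IsTwoMatching {V : Type*} (G M : SimpleGraph V) : Prop :=
  M ≤ G ∧ ∀ v : V, (M.neighborSet v).ncard ≤ 2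

/-- A maximum 2-matching of `G`: a 2-matching with the maximum number of edges. -/
def SimpleGraph.IsMaxTwoMatching {V : Type*} (G M : SimpleGraph V) : Prop :=
  G.IsTwoMatching M ∧
    ∀ M' : SimpleGraph V, G.IsTwoMatching M' → M'.edgeSet.ncard ≤ M.edgeSet.ncard

/-- A path cover of `G`, encoded as a spanning linear forest: a spanning subgraph
`P ≤ G` with maximum degree at most 2 and no cycles.  Its connected components are
exactly the vertex-disjoint paths covering all vertices of `G`. -/
def SimpleGraph.IsPathCover {V : Type*} (G P : SimpleGraph V) : Prop :=
  P ≤ G ∧ (∀ v : V, (P.neighborSet v).ncard ≤ 2) ∧ P.IsAcyclic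

/-- The size of a path cover: the number of paths, i.e. of connected components. -/
noncomputable def SimpleGraph.coverSize {V : Type*} (P : SimpleGraph V) : ℕ :=
  Nat.card P.ConnectedComponent

/-- The number of 0-paths (isolated vertices) of a path cover / 2-matching. -/
noncomputable def SimpleGraph.numZeroPaths {V : Type*} (P : SimpleGraph V) : ℕ :=
  {v : V | P.neighborSet v = ∅}.ncard

/-- The number of 1-paths (connected components consisting of a single edge,
i.e. having exactly two vertices) of a path cover. -/
noncomputable def SimpleGraph.numOnePaths {V : Type*} (P : SimpleGraph V) : ℕ :=
  {c : P.ConnectedComponent | c.supp.ncard = 2}.ncard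

/-- The number of connected components having at most two vertices. -/
noncomputable def SimpleGraph.numSmallComponents {V : Type*} (M : SimpleGraph V) : ℕ :=
  {c : M.ConnectedComponent | c.supp.ncard ≤ 2}.ncard

/-- The number of cycle components of a 2-matching: the components in which
every vertex has degree exactly 2. -/
noncomputable def SimpleGraph.numCycleComponents {V : Type*} (M : SimpleGraph V) : ℕ :=
  {c : M.ConnectedComponent | ∀ v ∈ c.supp, (M.neighborSet v).ncard = 2}.ncard

/-!
Replace the edge `wx` of `M` by `vw`, where `x` is a neighbour of `w` that has a second
neighbour `y ≠ w`. The number of edges is unchanged, `v` and `w` end with degree at most two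
(`w` loses `x` and gains `v`), and `x` keeps the neighbour `y`; so the result is again a maximum
2-matching, in which `v` is no longer isolated and no new isolated vertex appears. Such an `x`
exists because otherwise the component of `w` would be contained in `w` together with its at
most two neighbours.
-/

namespace SimpleGraph

variable {V : Type*}

lemma neighborSet_edge_left {v w : V} (h : v ≠ w) : (edge v w).neighborSet v = {w} := by
  ext u
  simp only [mem_neighborSet, edge_adj, Set.mem_singleton_iff]
  grind

lemma neighborSet_edge_right {v w : V} (h : v ≠ w) : (edge v w).neighborSet w = {v} := by
  rw [edge_comm, neighborSet_edge_left h.symm]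

lemma neighborSet_edge_of_ne {u v w : V} (hv : u ≠ v) (hw : u ≠ w) :
    (edge v w).neighborSet u = ∅ := by
  ext z
  simp [edge_adj, hv, hw]

lemma ncard_edgeSet_sup_edge [Finite V] {M : SimpleGraph V} {v w : V} (hn : ¬M.Adj v w)
    (h : v ≠ w) : (M ⊔ edge v w).edgeSet.ncard = M.edgeSet.ncard + 1 := by
  rw [edgeSet_sup, edgeSet_edge_of_ne h, Set.union_singleton,
    Set.ncard_insert_of_notMem (by simpa using hn)]

lemma ncard_edgeSet_sdiff_edge_add_one [Finite V] {M : SimpleGraph V} {w x : V}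
    (h : M.Adj w x) : (M \ edge w x).edgeSet.ncard + 1 = M.edgeSet.ncard := by
  rw [edgeSet_sdiff, edgeSet_edge_of_ne h.ne]
  exact Set.ncard_sdiff_singleton_add_one h

lemma ConnectedComponent.supp_subset_of_neighborSet_subset {M : SimpleGraph V} {S : Set V}
    {w : V} (hS : ∀ s ∈ S, M.neighborSet s ⊆ S) (hw : w ∈ S) :
    (M.connectedComponentMk w).supp ⊆ S := by
  intro u hu
  obtain ⟨p⟩ := (ConnectedComponent.exact hu).symm
  clear hu
  induction p with
  | nil => exact hw
  | cons h _ ih => exact ih (hS _ hw h)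

lemma ConnectedComponent.supp_subset_insert_neighborSet {M : SimpleGraph V} {w : V}
    (h : ∀ x, M.Adj w x → M.neighborSet x ⊆ {w}) :
    (M.connectedComponentMk w).supp ⊆ insert w (M.neighborSet w) := by
  refine supp_subset_of_neighborSet_subset (fun s hs => ?_) (Set.mem_insert w _)
  rcases hs with rfl | hws
  · exact Set.subset_insert s _
  · exact (h s hws).trans (Set.singleton_subset_iff.2 (Set.mem_insert w _))

lemma numZeroPaths_lt_numZeroPaths [Finite V] {M M' : SimpleGraph V} {v : V}
    (h : ∀ u, M'.neighborSet u = ∅ → M.neighborSet u = ∅)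
    (hv : M.neighborSet v = ∅) (hv' : M'.neighborSet v ≠ ∅) :
    M'.numZeroPaths < M.numZeroPaths :=
  Set.ncard_lt_ncard ⟨h, fun hsub => hv' (hsub hv)⟩

variable {G M N : SimpleGraph V}

lemma IsTwoMatching.anti [Finite V] (hM : G.IsTwoMatching M) (hNM : N ≤ M) :
    G.IsTwoMatching N :=
  ⟨hNM.trans hM.1, fun u => (Set.ncard_le_ncard (neighborSet_mono hNM u)).trans (hM.2 u)⟩

lemma IsTwoMatching.sup_edge [Finite V] {v w : V} (hN : G.IsTwoMatching N) (hvw : G.Adj v w)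
    (hv : (N.neighborSet v).ncard ≤ 1) (hw : (N.neighborSet w).ncard ≤ 1) :
    G.IsTwoMatching (N ⊔ edge v w) := by
  refine ⟨sup_le hN.1 ((edge_le_iff _).2 (Or.inr hvw)), fun u => ?_⟩
  rw [neighborSet_sup]
  refine (Set.ncard_union_le _ _).trans ?_
  by_cases huv : u = v
  · subst huv
    rw [neighborSet_edge_left hvw.ne, Set.ncard_singleton]
    omega
  by_cases huw : u = w
  · subst huw
    rw [neighborSet_edge_right hvw.ne, Set.ncard_singleton]
    omega
  rw [neighborSet_edge_of_ne huv huw, Set.ncard_empty]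
  exact hN.2 u

lemma IsMaxTwoMatching.of_ncard_edgeSet_eq {M' : SimpleGraph V} (hM : G.IsMaxTwoMatching M)
    (hM' : G.IsTwoMatching M') (h : M'.edgeSet.ncard = M.edgeSet.ncard) :
    G.IsMaxTwoMatching M' :=
  ⟨hM', fun M'' hM'' => h ▸ hM.2 M'' hM''⟩

variable [Finite V] {v w x y : V}

lemma IsMaxTwoMatching.sdiff_edge_sup_edge (hM : G.IsMaxTwoMatching M)
    (hv : M.neighborSet v = ∅) (hvw : G.Adj v w) (hwx : M.Adj w x) :
    G.IsMaxTwoMatching (M \ edge w x ⊔ edge v w) := by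
  have hle : M \ edge w x ≤ M := sdiff_le
  have hdeg_v : ((M \ edge w x).neighborSet v).ncard ≤ 1 :=
    (Set.ncard_le_ncard (neighborSet_mono hle v)).trans (by rw [hv, Set.ncard_empty]; omega)
  have hdeg_w : ((M \ edge w x).neighborSet w).ncard ≤ 1 := by
    rw [neighborSet_sdiff, neighborSet_edge_left hwx.ne,
      Set.ncard_sdiff_singleton_of_mem (show x ∈ M.neighborSet w from hwx)]
    have := hM.1.2 w
    omega
  have hnadj : ¬(M \ edge w x).Adj v w := fun h =>
    Set.eq_empty_iff_forall_notMem.1 hv w (hle h)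
  refine hM.of_ncard_edgeSet_eq ((hM.1.anti hle).sup_edge hvw hdeg_v hdeg_w) ?_
  rw [ncard_edgeSet_sup_edge hnadj hvw.ne, ncard_edgeSet_sdiff_edge_add_one hwx]

lemma numZeroPaths_sdiff_edge_sup_edge_lt (hv : M.neighborSet v = ∅) (hvw : v ≠ w)
    (hwx : M.Adj w x) (hxy : M.Adj x y) (hyw : y ≠ w) :
    (M \ edge w x ⊔ edge v w).numZeroPaths < M.numZeroPaths := by
  refine numZeroPaths_lt_numZeroPaths (fun u hu => ?_) hv ?_
  · rw [neighborSet_sup, Set.union_empty_iff, neighborSet_sdiff] at hu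
    obtain ⟨hN, hedge⟩ := hu
    have huw : u ≠ w := by
      rintro rfl
      simp [neighborSet_edge_right hvw] at hedge
    by_cases hux : u = x
    · subst hux
      rw [neighborSet_edge_right hwx.ne] at hN
      exact absurd hN (Set.nonempty_iff_ne_empty.1 ⟨y, hxy, hyw⟩)
    · rwa [neighborSet_edge_of_ne huw hux, Set.sdiff_empty] at hN
  · rw [neighborSet_sup, neighborSet_edge_left hvw]
    exact Set.nonempty_iff_ne_empty.1 ⟨w, Set.mem_union_right _ rfl⟩

end SimpleGraph

theorem stmt12_general {V : Type*} [Fintype V] (G M : SimpleGraph V)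
    (hM : G.IsMaxTwoMatching M) (v : V) (hv : M.neighborSet v = ∅)
    (w : V) (hadj : G.Adj v w)
    (hw4 : 4 ≤ (M.connectedComponentMk w).supp.ncard) :
    ∃ M' : SimpleGraph V, G.IsMaxTwoMatching M' ∧
      M'.numZeroPaths < M.numZeroPaths := by
  obtain ⟨x, y, hwx, hxy, hyw⟩ : ∃ x y, M.Adj w x ∧ M.Adj x y ∧ y ≠ w := by
    by_contra! h
    have hsupp := ConnectedComponent.supp_subset_insert_neighborSet fun x hwx y hxy =>
      h x y hwx hxy
    have := (Set.ncard_le_ncard hsupp).trans (Set.ncard_insert_le w _)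
    have := hM.1.2 w
    omega
  exact ⟨_, hM.sdiff_edge_sup_edge hv hadj hwx,
    numZeroPaths_sdiff_edge_sup_edge_lt hv hadj.ne hwx hxy hyw⟩

/-- If an isolated vertex `v` of a maximum 2-matching `M` of `G` is
adjacent in `G` to a vertex `w` lying on a path component of `M` with at least 4
vertices (a component containing no cycle), then `G` has a maximum 2-matching with
strictly fewer isolated vertices than `M`. -/
theorem stmt12 {V : Type*} [Fintype V] (G M : SimpleGraph V)
    (hM : G.IsMaxTwoMatching M) (v : V) (hv : M.neighborSet v = ∅)
    (w : V) (hadj : G.Adj v w)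
    (hw4 : 4 ≤ (M.connectedComponentMk w).supp.ncard)
    (hwpath : ∀ x : V, M.Reachable w x → ∀ c : M.Walk x x, ¬ c.IsCycle) :
    ∃ M' : SimpleGraph V, G.IsMaxTwoMatching M' ∧
      M'.numZeroPaths < M.numZeroPaths :=
  stmt12_general G M hM v hv w hadj hw4
end

section
/- Let G be a finite simple graph and let M be a maximum 2-matching of G one of whose connected components is a single edge (v0, u0) (a 1-path). If v0 is adjacent in G to a vertex lying on a cycle component of M, then G has a maximum 2-matching in which the number of connected components with at most two vertices is strictly smaller than in M. -/
open SimpleGraph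

/-!
Swap a cycle edge for the edge `v0 w`: delete the edge `w z` of the cycle through `w` and add
`v0 w`. The edge count is unchanged, so the result is again a maximum 2-matching. The 1-path
`{v0, u0}` is absorbed into the component of `w`, and `z` keeps the path `z t t'` of the former
cycle, so the components meeting `v0`, `w` or `z` all have at least three vertices, while every
other component is unchanged. Hence the small components of the new 2-matching are small
components of `M` other than `{v0, u0}`.
-/

namespace SimpleGraph

variable {V : Type*}

theorem Reachable.mono_of_forall_adj {G H : SimpleGraph V} {S : Set V}
    (hS : ∀ a ∈ S, ∀ b, G.Adj a b → H.Adj a b ∧ b ∈ S) {u v : V} (hu : u ∈ S)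
    (h : G.Reachable u v) : H.Reachable u v ∧ v ∈ S := by
  obtain ⟨p⟩ := h
  induction p with
  | nil => exact ⟨Reachable.rfl, hu⟩
  | cons hab _ ih =>
    obtain ⟨hH, hb⟩ := hS _ hu _ hab
    obtain ⟨hreach, hv⟩ := ih hb
    exact ⟨hH.reachable.trans hreach, hv⟩

theorem ConnectedComponent.supp_connectedComponentMk_eq_of_adj_iff {G H : SimpleGraph V}
    (c : H.ConnectedComponent) (h : ∀ a ∈ c.supp, ∀ b, G.Adj a b ↔ H.Adj a b) {x : V}
    (hx : x ∈ c.supp) : (G.connectedComponentMk x).supp = c.supp := by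
  have hGH : ∀ a ∈ c.supp, ∀ b, G.Adj a b → H.Adj a b ∧ b ∈ c.supp := fun a ha b hab =>
    ⟨(h a ha b).mp hab, (c.mem_supp_congr_adj ((h a ha b).mp hab)).mp ha⟩
  have hHG : ∀ a ∈ c.supp, ∀ b, H.Adj a b → G.Adj a b ∧ b ∈ c.supp := fun a ha b hab =>
    ⟨(h a ha b).mpr hab, (c.mem_supp_congr_adj hab).mp ha⟩
  ext v
  rw [ConnectedComponent.mem_supp_iff, ConnectedComponent.eq]
  exact ⟨fun hvx => (Reachable.mono_of_forall_adj hGH hx hvx.symm).2, fun hv =>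
    (Reachable.mono_of_forall_adj hHG hx (ConnectedComponent.exact (hx.trans hv.symm))).1.symm⟩

theorem three_le_ncard_supp_of_adj_of_adj [Finite V] {G : SimpleGraph V} {x a b : V}
    (hxa : G.Adj x a) (hab : G.Adj a b) (hxb : x ≠ b) :
    3 ≤ (G.connectedComponentMk x).supp.ncard := by
  have hsub : ({x, a, b} : Set V) ⊆ (G.connectedComponentMk x).supp := by
    rintro v (rfl | rfl | rfl)
    · rfl
    · exact (ConnectedComponent.connectedComponentMk_eq_of_adj hxa).symm
    · exact ((ConnectedComponent.connectedComponentMk_eq_of_adj hxa).trans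
        (ConnectedComponent.connectedComponentMk_eq_of_adj hab)).symm
  calc 3 = ({x, a, b} : Set V).ncard := by
        rw [Set.ncard_insert_of_notMem (by rintro (h | h) <;> [exact hxa.ne h; exact hxb h]),
          Set.ncard_pair hab.ne]
    _ ≤ _ := Set.ncard_le_ncard hsub

theorem neighborSet_subset_of_supp_eq_pair {M : SimpleGraph V} {v u : V}
    (h : (M.connectedComponentMk v).supp = {v, u}) : M.neighborSet v ⊆ {u} := by
  intro b hb
  have hmem : b ∈ (M.connectedComponentMk v).supp :=
    (ConnectedComponent.mem_supp_congr_adj _ hb).mp rfl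
  rw [h] at hmem
  exact hmem.resolve_left hb.ne'

theorem numSmallComponents_lt_of_supp [Finite V] {G H : SimpleGraph V}
    (h : ∀ c : H.ConnectedComponent, c.supp.ncard ≤ 2 →
      ∃ d : G.ConnectedComponent, d.supp = c.supp)
    (d₀ : G.ConnectedComponent) (hd₀ : d₀.supp.ncard ≤ 2)
    (hd₀H : ∀ c : H.ConnectedComponent, c.supp.ncard ≤ 2 → c.supp ≠ d₀.supp) :
    H.numSmallComponents < G.numSmallComponents := by
  have hsubset : ConnectedComponent.supp '' {c : H.ConnectedComponent | c.supp.ncard ≤ 2} ⊂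
      ConnectedComponent.supp '' {d : G.ConnectedComponent | d.supp.ncard ≤ 2} := by
    refine ⟨?_, fun hsup => ?_⟩
    · rintro _ ⟨c, hc, rfl⟩
      obtain ⟨d, hd⟩ := h c hc
      exact ⟨d, show d.supp.ncard ≤ 2 from hd ▸ hc, hd⟩
    · obtain ⟨c, hc, hcd⟩ := hsup ⟨d₀, hd₀, rfl⟩
      exact hd₀H c hc hcd
  have := Set.ncard_lt_ncard hsubset
  rwa [Set.ncard_image_of_injective _ ConnectedComponent.supp_injective,
    Set.ncard_image_of_injective _ ConnectedComponent.supp_injective] at this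

section Swap

variable {M : SimpleGraph V} {v w z : V}

theorem adj_deleteEdges_sup_edge_iff_of_ne {a b : V} (hav : a ≠ v) (haw : a ≠ w)
    (haz : a ≠ z) :
    (M.deleteEdges {s(w, z)} ⊔ edge v w).Adj a b ↔ M.Adj a b := by
  simp [edge_adj, hav, haw, haz]

theorem ConnectedComponent.exists_supp_eq_of_deleteEdges_sup_edge
    (c : (M.deleteEdges {s(w, z)} ⊔ edge v w).ConnectedComponent)
    (hc : ∀ a ∈ c.supp, a ≠ v ∧ a ≠ w ∧ a ≠ z) :
    ∃ d : M.ConnectedComponent, d.supp = c.supp := by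
  obtain ⟨x, hx⟩ := c.nonempty_supp
  refine ⟨M.connectedComponentMk x,
    c.supp_connectedComponentMk_eq_of_adj_iff (fun a ha b => ?_) hx⟩
  obtain ⟨hav, haw, haz⟩ := hc a ha
  exact (adj_deleteEdges_sup_edge_iff_of_ne hav haw haz).symm

theorem IsTwoMatching.deleteEdges_sup_edge [Finite V] {G : SimpleGraph V}
    (hM : G.IsTwoMatching M) (hwz : M.Adj w z) (hvw : G.Adj v w)
    (hv : (M.neighborSet v).ncard ≤ 1) :
    G.IsTwoMatching (M.deleteEdges {s(w, z)} ⊔ edge v w) := by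
  obtain ⟨hMG, hdeg⟩ := hM
  refine ⟨sup_le ((M.deleteEdges_le _).trans hMG) ((edge_le_iff G).mpr (.inr hvw)), fun x => ?_⟩
  by_cases hxv : x = v
  · subst hxv
    have hsub : (M.deleteEdges {s(w, z)} ⊔ edge x w).neighborSet x ⊆
        insert w (M.neighborSet x) := by
      intro b
      grind [mem_neighborSet, deleteEdges_adj]
    calc _ ≤ (insert w (M.neighborSet x)).ncard := Set.ncard_le_ncard hsub
      _ ≤ _ := (Set.ncard_insert_le _ _).trans (by omega)
  by_cases hxw : x = w
  · subst hxw
    have hsub : (M.deleteEdges {s(x, z)} ⊔ edge v x).neighborSet x ⊆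
        insert v (M.neighborSet x \ {z}) := by
      intro b
      grind [mem_neighborSet, deleteEdges_adj]
    calc _ ≤ (insert v (M.neighborSet x \ {z})).ncard := Set.ncard_le_ncard hsub
      _ ≤ (M.neighborSet x \ {z}).ncard + 1 := Set.ncard_insert_le _ _
      _ ≤ 2 := by
        rw [Set.ncard_sdiff_singleton_of_mem (show z ∈ M.neighborSet x from hwz)]
        have := hdeg x
        omega
  have hsub : (M.deleteEdges {s(w, z)} ⊔ edge v w).neighborSet x ⊆ M.neighborSet x := by
    intro b
    grind [mem_neighborSet, deleteEdges_adj]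
  exact (Set.ncard_le_ncard hsub).trans (hdeg x)

theorem IsMaxTwoMatching.deleteEdges_sup_edge [Finite V] {G : SimpleGraph V}
    (hM : G.IsMaxTwoMatching M) (hwz : M.Adj w z) (hvw : G.Adj v w) (hMvw : ¬ M.Adj v w)
    (hv : (M.neighborSet v).ncard ≤ 1) :
    G.IsMaxTwoMatching (M.deleteEdges {s(w, z)} ⊔ edge v w) := by
  have hedgeSet : (M.deleteEdges {s(w, z)} ⊔ edge v w).edgeSet =
      insert s(v, w) (M.edgeSet \ {s(w, z)}) := by
    have hdiag : ¬ s(v, w).IsDiag := by simpa using hvw.ne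
    have hne : s(v, w) ≠ s(w, z) := fun h => hMvw (h ▸ hwz : s(v, w) ∈ M.edgeSet)
    ext e
    simp only [edgeSet_sup, edgeSet_deleteEdges, edgeSet_edge, Set.mem_union,
      Set.mem_insert_iff, Set.mem_sdiff, Set.mem_singleton_iff, Sym2.mem_diagSet]
    grind
  refine ⟨hM.1.deleteEdges_sup_edge hwz hvw hv, fun N hN => ?_⟩
  rw [hedgeSet, Set.ncard_insert_of_notMem (fun h => hMvw h.1),
    Set.ncard_sdiff_singleton_add_one (show s(w, z) ∈ M.edgeSet from hwz)]
  exact hM.2 N hN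

theorem numSmallComponents_deleteEdges_sup_edge_lt [Finite V] {u : V}
    (hcomp : (M.connectedComponentMk v).supp = {v, u}) (hvw : v ≠ w)
    (hw : 3 ≤ ((M.deleteEdges {s(w, z)} ⊔ edge v w).connectedComponentMk w).supp.ncard)
    (hz : 3 ≤ ((M.deleteEdges {s(w, z)} ⊔ edge v w).connectedComponentMk z).supp.ncard) :
    (M.deleteEdges {s(w, z)} ⊔ edge v w).numSmallComponents < M.numSmallComponents := by
  have hvw' : (M.deleteEdges {s(w, z)} ⊔ edge v w).Adj v w := by simp [edge_adj, hvw]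
  have hsmall : ∀ c : (M.deleteEdges {s(w, z)} ⊔ edge v w).ConnectedComponent,
      c.supp.ncard ≤ 2 → ∀ a ∈ c.supp, a ≠ v ∧ a ≠ w ∧ a ≠ z := by
    intro c hc a ha
    rw [← ha] at hc
    refine ⟨?_, ?_, ?_⟩ <;> rintro rfl
    · rw [ConnectedComponent.connectedComponentMk_eq_of_adj hvw'] at hc
      omega
    all_goals omega
  have hpair : (M.connectedComponentMk v).supp.ncard ≤ 2 := by
    rw [hcomp]
    exact (Set.ncard_insert_le _ _).trans (by simp)
  refine numSmallComponents_lt_of_supp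
    (fun c hc => c.exists_supp_eq_of_deleteEdges_sup_edge (hsmall c hc)) _ hpair fun c hc hcv => ?_
  exact (hsmall c hc v (hcv ▸ hcomp ▸ Set.mem_insert v {u})).1 rfl

end Swap

end SimpleGraph

/-- Let `M` be a maximum 2-matching of `G` one of whose components is a
single edge `(v0, u0)`.  If `v0` is adjacent in `G` to a vertex `w` lying on a cycle
component of `M`, then `G` has a maximum 2-matching in which the number of components
with at most two vertices is strictly smaller than in `M`. -/
theorem stmt13 {V : Type*} [Fintype V] (G M : SimpleGraph V)
    (hM : G.IsMaxTwoMatching M) (v0 u0 : V)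
    (hedge : M.Adj v0 u0)
    (hcomp : (M.connectedComponentMk v0).supp = {v0, u0})
    (w : V) (hadj : G.Adj v0 w)
    (hw : ∀ x : V, M.Reachable w x → (M.neighborSet x).ncard = 2) :
    ∃ M' : SimpleGraph V, G.IsMaxTwoMatching M' ∧
      M'.numSmallComponents < M.numSmallComponents := by
  have hdeg_v0 : (M.neighborSet v0).ncard ≤ 1 :=
    (Set.ncard_le_ncard (neighborSet_subset_of_supp_eq_pair hcomp)).trans
      (Set.ncard_singleton u0).le
  have hfar : ∀ x, M.Reachable w x → x ≠ v0 ∧ x ≠ u0 := by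
    refine fun x hx => ⟨?_, ?_⟩ <;> rintro rfl
    · have := hw x hx; omega
    · have := hw v0 (hx.trans hedge.symm.reachable); omega
  have one_lt : ∀ x, M.Reachable w x → 1 < (M.neighborSet x).ncard := fun x hx => by
    rw [hw x hx]; norm_num
  obtain ⟨z, hwz, -⟩ := Set.exists_ne_of_one_lt_ncard (one_lt w .rfl) w
  obtain ⟨t, hzt, htw⟩ := Set.exists_ne_of_one_lt_ncard (one_lt z hwz.reachable) w
  have hwt : M.Reachable w t := hwz.reachable.trans hzt.reachable
  obtain ⟨t', htt', ht'z⟩ := Set.exists_ne_of_one_lt_ncard (one_lt t hwt) z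
  set M' := M.deleteEdges {s(w, z)} ⊔ edge v0 w
  have hkeep : ∀ {a b : V}, M.Reachable w a → a ≠ w → a ≠ z → M.Adj a b → M'.Adj a b :=
    fun {a _} ha haw haz hab => (adj_deleteEdges_sup_edge_iff_of_ne (hfar a ha).1 haw haz).mpr hab
  have hwv0 : M'.Adj w v0 := by simp [M', edge_adj, hadj.ne']
  have hu0v0 : M'.Adj u0 v0 :=
    (adj_deleteEdges_sup_edge_iff_of_ne hedge.ne' (hfar w .rfl).2.symm
      (hfar z hwz.reachable).2.symm).mpr hedge.symm
  exact ⟨M', hM.deleteEdges_sup_edge hwz hadj (fun h => (hfar v0 h.symm.reachable).1 rfl) hdeg_v0,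
    numSmallComponents_deleteEdges_sup_edge_lt hcomp hadj.ne
      (three_le_ncard_supp_of_adj_of_adj hwv0 hu0v0.symm (hfar w .rfl).2)
      (three_le_ncard_supp_of_adj_of_adj (hkeep hwt htw hzt.ne' hzt.symm).symm
        (hkeep hwt htw hzt.ne' htt') ht'z.symm)⟩
end
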